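/- Given a real number x and integer n ≥ 2, set p = F_n, q = F_{n+1}, c = ⌊xq⌉ (nearest integer), b = c·((-1)^{n+1}F_n) - q·⌊c·((-1)^{n+1}F_n)/q⌉, and a = c·((-1)^n F_{n-1}) + p·⌊c·((-1)^{n+1}F_n)/q⌉. Then |x - (a + bτ)| ≤ τ^{n-1}(1 - τ^n) and |b| ≤ φ^n, where τ = (√5-1)/2 and φ = τ^{-1}. -/

import Mathlib

/-!
Since `a + bτ = c (v + uτ) + t (p - qτ)` and Cassini's identity gives `qv + up = 1`,
`q (x - (a + bτ)) = (qx - c) + b (p - qτ)`. Both rounding errors are at most `1/2`, so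
`|qx - c| ≤ 1/2` and `|b| ≤ q/2`, while `p - qτ = (-τ)^(n+1)` because `-τ` is the conjugate
root of `X² - X - 1`. Hence `|x - (a + bτ)| ≤ 1/(2 F_{n+1}) + τ^(n+1)/2`, and
`F_{n+1} ≥ φ^(n-1) = τ^(-(n-1))` turns this into the stated bound. Finally
`|b| ≤ F_{n+1}/2 ≤ φ^n`.
-/

noncomputable def tau : ℝ := (Real.sqrt 5 - 1) / 2
noncomputable def phi : ℝ := (Real.sqrt 5 + 1) / 2

open Real goldenRatio

lemma abs_sub_mul_round_div_le {m q : ℝ} (hq : 0 < q) : |m - q * round (m / q)| ≤ q / 2 := by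
  have h : m - q * round (m / q) = q * (m / q - round (m / q)) := by field_simp
  rw [h, abs_mul, abs_of_pos hq]
  linarith [mul_le_mul_of_nonneg_left (abs_sub_round (m / q)) hq.le]

lemma mul_sub_eq_of_det_eq_one (x τ : ℝ) {p q u v : ℤ} (c t : ℤ) (hdet : q * v + u * p = 1) :
    q * (x - ((c * v + p * t : ℤ) + (c * u - q * t : ℤ) * τ))
      = (x * q - c) + (c * u - q * t : ℤ) * (p - q * τ) := by
  have hdet' : (q : ℝ) * v + u * p = 1 := by exact_mod_cast hdet
  push_cast
  linear_combination (-(c : ℝ)) * hdet'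

lemma abs_sub_le_of_det_eq_one {x τ : ℝ} {p q u v c t : ℤ} (hdet : q * v + u * p = 1)
    (hq : 0 < q) (hc : c = round (x * q)) (ht : t = round ((c * u : ℝ) / q)) :
    |x - ((c * v + p * t : ℤ) + (c * u - q * t : ℤ) * τ)| ≤ 1 / (2 * q) + |p - q * τ| / 2 := by
  have hqR : (0 : ℝ) < q := by exact_mod_cast hq
  have hround : |x * q - c| ≤ 1 / 2 := by rw [hc]; exact abs_sub_round _
  have hrem : |((c * u - q * t : ℤ) : ℝ)| ≤ q / 2 := by
    rw [ht]; push_cast; exact abs_sub_mul_round_div_le hqR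
  rw [← mul_le_mul_iff_of_pos_left hqR, ← abs_of_pos hqR, ← abs_mul,
    mul_sub_eq_of_det_eq_one x τ c t hdet, abs_of_pos hqR]
  calc |(x * q - c) + (c * u - q * t : ℤ) * (p - q * τ)|
      ≤ |x * q - c| + |((c * u - q * t : ℤ) : ℝ)| * |p - q * τ| := by
        rw [← abs_mul]; exact abs_add_le _ _
    _ ≤ 1 / 2 + q / 2 * |p - q * τ| := by gcongr
    _ = q * (1 / (2 * q) + |p - q * τ| / 2) := by field_simp

lemma tau_eq_neg_goldenConj : tau = -ψ := by unfold tau; ring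

lemma phi_eq_goldenRatio : phi = φ := by unfold phi; ring

lemma tau_eq_inv_phi : tau = phi⁻¹ := by
  rw [tau_eq_neg_goldenConj, phi_eq_goldenRatio, inv_goldenRatio]

lemma tau_pos : 0 < tau := by rw [tau_eq_neg_goldenConj]; linarith [goldenConj_neg]

lemma tau_lt_one : tau < 1 := by rw [tau_eq_neg_goldenConj]; linarith [neg_one_lt_goldenConj]

lemma tau_sq : tau ^ 2 = 1 - tau := by
  rw [tau_eq_neg_goldenConj, neg_sq, goldenConj_sq]; ring

lemma one_half_le_tau : 1 / 2 ≤ tau := by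
  unfold tau; linarith [Real.le_sqrt_of_sq_le (show (2 : ℝ) ^ 2 ≤ 5 by norm_num)]

lemma tau_le_five_eighths : tau ≤ 5 / 8 := by
  unfold tau; nlinarith [Real.sq_sqrt (show (0 : ℝ) ≤ 5 by norm_num), Real.sqrt_nonneg 5]

lemma tau_pow_le_one_half {m : ℕ} (hm : 2 ≤ m) : tau ^ m ≤ 1 / 2 := calc
  tau ^ m ≤ tau ^ 2 := pow_le_pow_of_le_one tau_pos.le tau_lt_one.le hm
  _ ≤ 1 / 2 := by linarith [tau_sq, one_half_le_tau]

lemma fib_cassini (n : ℕ) :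
    (Nat.fib (n + 2) : ℤ) * Nat.fib n - Nat.fib (n + 1) ^ 2 = (-1) ^ (n + 1) := by
  have h := Int.fib_succ_mul_fib_pred_sub_fib_sq ((n + 1 : ℕ) : ℤ)
  rwa [show ((n + 1 : ℕ) : ℤ) + 1 = ((n + 2 : ℕ) : ℤ) by push_cast; ring,
    show ((n + 1 : ℕ) : ℤ) - 1 = (n : ℤ) by push_cast; ring,
    Int.fib_natCast, Int.fib_natCast, Int.fib_natCast, Int.natAbs_natCast] at h

lemma fib_sub_fib_succ_mul_tau (n : ℕ) :
    (Nat.fib n : ℝ) - Nat.fib (n + 1) * tau = (-tau) ^ (n + 1) := by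
  rw [tau_eq_neg_goldenConj, neg_neg, ← goldenConj_mul_fib_succ_add_fib]; ring

lemma fib_succ_le_phi_pow (n : ℕ) : (Nat.fib (n + 1) : ℝ) ≤ phi ^ n := by
  rw [phi_eq_goldenRatio, ← fib_succ_sub_goldenConj_mul_fib]
  nlinarith [goldenConj_neg, (Nat.cast_nonneg (Nat.fib n) : (0 : ℝ) ≤ _)]

lemma goldenRatio_pow_le_fib_add_two (m : ℕ) : φ ^ m ≤ Nat.fib (m + 2) := by
  have h := goldenRatio_mul_fib_succ_add_fib (m + 1)
  have hle : (Nat.fib (m + 1) : ℝ) ≤ Nat.fib (m + 2) := by exact_mod_cast Nat.fib_mono (by omega)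
  have : φ ^ 2 * φ ^ m ≤ φ ^ 2 * Nat.fib (m + 2) := calc
    φ ^ 2 * φ ^ m = φ * Nat.fib (m + 2) + Nat.fib (m + 1) := by rw [← pow_add, add_comm, h]
    _ ≤ (φ + 1) * Nat.fib (m + 2) := by linarith
    _ = φ ^ 2 * Nat.fib (m + 2) := by rw [goldenRatio_sq]
  exact le_of_mul_le_mul_left this (by positivity)

lemma inv_fib_add_two_le_tau_pow (m : ℕ) : (Nat.fib (m + 2) : ℝ)⁻¹ ≤ tau ^ m := by
  rw [tau_eq_inv_phi, phi_eq_goldenRatio, inv_pow]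
  exact inv_anti₀ (by positivity) (goldenRatio_pow_le_fib_add_two m)

lemma one_div_two_mul_fib_add_tau_pow_le {m : ℕ} (hm : 1 ≤ m) :
    1 / (2 * Nat.fib (m + 2)) + tau ^ (m + 2) / 2 ≤ tau ^ m * (1 - tau ^ (m + 1)) := by
  obtain rfl | hm := hm.eq_or_lt
  · -- `1 / F₃ ≤ τ` is too weak here, so use `F₃ = 2`.
    have hcube : tau ^ 3 = 2 * tau - 1 := by linear_combination (tau - 1) * tau_sq
    rw [show Nat.fib (1 + 2) = 2 from rfl, hcube, pow_one]
    nlinarith [tau_sq, tau_le_five_eighths]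
  · have hinv : 1 / (2 * Nat.fib (m + 2)) ≤ tau ^ m / 2 := by
      rw [one_div, mul_inv, inv_eq_one_div (2 : ℝ)]
      linarith [inv_fib_add_two_le_tau_pow m]
    have hsmall := tau_pow_le_one_half (Nat.succ_le_of_lt hm)
    rw [pow_add, tau_sq, pow_succ]
    nlinarith [mul_nonneg (mul_nonneg (sub_nonneg.2 hsmall) (pow_pos tau_pos m).le) tau_pos.le]

theorem stmt18 (x : ℝ) (n : ℕ) (hn : 2 ≤ n)
    (p q u v c t a b : ℤ)
    (hp : p = Nat.fib n) (hq : q = Nat.fib (n + 1))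
    (hu : u = (-1) ^ (n + 1) * Nat.fib n) (hv : v = (-1) ^ n * Nat.fib (n - 1))
    (hc : c = round (x * (q : ℝ)))
    (ht : t = round (((c : ℝ) * (u : ℝ)) / (q : ℝ)))
    (ha : a = c * v + p * t) (hb : b = c * u - q * t) :
    |x - ((a : ℝ) + (b : ℝ) * tau)| ≤ tau ^ (n - 1) * (1 - tau ^ n) ∧
      |(b : ℝ)| ≤ phi ^ n := by
  obtain ⟨m, rfl⟩ : ∃ m, n = m + 1 := ⟨n - 1, by omega⟩
  rw [Nat.add_sub_cancel] at hv ⊢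
  subst ha hb
  have hdet : q * v + u * p = 1 := by
    rw [hq, hv, hu, hp]
    have hsign : ((-1 : ℤ) ^ (m + 1)) ^ 2 = 1 := by rw [← pow_mul, pow_mul', neg_one_sq, one_pow]
    linear_combination (-1) ^ (m + 1) * fib_cassini m + hsign
  have hq0 : 0 < q := by rw [hq]; exact_mod_cast Nat.fib_pos.2 (by omega)
  have hpq : |(p : ℝ) - q * tau| = tau ^ (m + 2) := by
    rw [hp, hq]; push_cast
    rw [fib_sub_fib_succ_mul_tau, abs_pow, abs_neg, abs_of_pos tau_pos]
  constructor
  · calc _ ≤ 1 / (2 * q) + |(p : ℝ) - q * tau| / 2 := abs_sub_le_of_det_eq_one hdet hq0 hc ht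
      _ ≤ _ := by rw [hpq, hq]; exact one_div_two_mul_fib_add_tau_pow_le (by omega)
  · calc |((c * u - q * t : ℤ) : ℝ)| ≤ q / 2 := by
          rw [ht]; push_cast; exact abs_sub_mul_round_div_le (by exact_mod_cast hq0)
      _ ≤ q := by linarith [(Int.cast_pos.2 hq0 : (0 : ℝ) < q)]
      _ ≤ phi ^ (m + 1) := by rw [hq]; exact_mod_cast fib_succ_le_phi_pow (m + 1)
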